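/- Let N(n, s, m, T) count sequences in Σ₄^n with ℓ-RLL constraint, last run s = {a}^t, GC-content exactly m, and synthesis time at most T. Then for n > t and T ≥ 4(t-1) + a: N(n, {a}^t, m, T) = Σ over runs s' = {a'}^{t'} with a' ≠ a, 1 ≤ t' ≤ ℓ, of N(n - t, s', m - G(s), T - 4(t-1) - ((a - a') mod 4)), where G({a}^t) = t if a ∈ {3,4} and 0 otherwise, and the shifted modulo takes values in {1,2,3,4}. -/

import Mathlib

/-! Cutting off the last run `{a}^t` leaves a sequence of length `n - t` whose own last run
`{a'}^{t'}` has `a' ≠ a` and `t' ≤ ℓ`; conversely, appending `{a}^t` with `t ≤ ℓ` to such a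
sequence keeps it `ℓ`-RLL, since the two runs cannot merge. The appended run adds `G({a}^t)` to
the GC-content and `smod (a - a') + 4 (t - 1)` to the synthesis time, and the last run of a
sequence is unique, so the classes indexed by `(a', t')` are disjoint. -/

open scoped Classical

/-- Shifted modulo: maps any integer to {1,2,3,4}, with `smod x ≡ x [ZMOD 4]`. -/
def smod (x : ℤ) : ℤ := (x - 1) % 4 + 1

/-- Auxiliary synthesis-time sum over the differential sequence. -/
def synthAux : ℤ → List ℤ → ℤ
  | _, [] => 0
  | prev, b :: rest => smod (b - prev) + synthAux b rest

/-- Synthesis time `T(c) = Σ dᵢ(c)` with `d₁ = c₁`, `dᵢ = (cᵢ - c_{i-1}) mod 4` (shifted). -/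
def synth : List ℤ → ℤ
  | [] => 0
  | a :: rest => a + synthAux a rest

/-- Membership in the alphabet Σ₄ = {1,2,3,4}. -/
def inSigma4 (c : List ℤ) : Prop := ∀ x ∈ c, 1 ≤ x ∧ x ≤ 4

/-- ℓ-runlength-limited: no ℓ+1 consecutive equal symbols. -/
def RLL (ℓ : ℕ) (c : List ℤ) : Prop :=
  ∀ a ∈ c, ¬ (List.replicate (ℓ + 1) a <:+: c)

/-- The last (maximal constant) run of `c` is `{a}^t`. -/
def lastRunIs (c : List ℤ) (a : ℤ) (t : ℕ) : Prop :=
  List.replicate t a <:+ c ∧ ¬ (List.replicate (t + 1) a <:+ c)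

/-- The finite set of all length-`n` sequences over Σ₄ = {1,2,3,4}. -/
def seqs (n : ℕ) : Finset (List ℤ) :=
  (Finset.univ : Finset (Fin n → Fin 4)).image
    (fun f => (List.ofFn f).map (fun x : Fin 4 => ((x : ℕ) : ℤ) + 1))

/-- GC-content: number of symbols greater than 2 (i.e. C or G). -/
def gc (c : List ℤ) : ℕ := (c.filter (fun x => 2 < x)).length

/-- Length-`n` ℓ-RLL sequences with last run `{a}^t`, GC-content `m`, synthesis time ≤ `T`. -/
noncomputable def CsetG (n ℓ : ℕ) (a : ℤ) (t : ℕ) (m T : ℤ) : Finset (List ℤ) :=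
  (seqs n).filter (fun c => RLL ℓ c ∧ lastRunIs c a t ∧ (gc c : ℤ) = m ∧ synth c ≤ T)

noncomputable def NcountG (n ℓ : ℕ) (a : ℤ) (t : ℕ) (m T : ℤ) : ℕ := (CsetG n ℓ a t m T).card

section Lists

variable {α : Type*}

theorem List.replicate_suffix_replicate {a : α} {k t : ℕ} (h : k ≤ t) :
    List.replicate k a <:+ List.replicate t a :=
  ⟨List.replicate (t - k) a, by rw [← List.replicate_add, Nat.sub_add_cancel h]⟩

theorem List.replicate_succ_suffix_append_replicate_iff {a : α} {t : ℕ} {c : List α} :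
    List.replicate (t + 1) a <:+ c ++ List.replicate t a ↔ c.getLast? = some a := by
  rw [List.replicate_succ, ← List.singleton_append, List.suffix_append_self_iff,
    List.singleton_suffix_iff_getLast?_eq_some]

end Lists

lemma smod_zero : smod 0 = 4 := by decide

lemma synthAux_append (p : ℤ) (l r : List ℤ) :
    synthAux p (l ++ r) = synthAux p l + synthAux ((p :: l).getLast (List.cons_ne_nil _ _)) r := by
  induction l generalizing p with
  | nil => simp [synthAux]
  | cons b l ih =>
    simp only [List.cons_append, synthAux, ih b, List.getLast_cons (List.cons_ne_nil b l)]
    ring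

lemma synthAux_replicate_self (a : ℤ) (k : ℕ) : synthAux a (List.replicate k a) = 4 * k := by
  induction k with
  | zero => simp [synthAux]
  | succ k ih => simp [List.replicate_succ, synthAux, ih, smod_zero]; ring

lemma synth_append_replicate {c : List ℤ} {a b : ℤ} {t : ℕ} (hc : c.getLast? = some b)
    (ht : 1 ≤ t) : synth (c ++ List.replicate t a) = synth c + smod (a - b) + 4 * ((t : ℤ) - 1) := by
  obtain ⟨k, rfl⟩ : ∃ k, t = k + 1 := ⟨t - 1, by omega⟩
  cases c with
  | nil => simp at hc
  | cons x c =>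
    rw [List.getLast?_eq_some_getLast (List.cons_ne_nil x c), Option.some_inj] at hc
    simp only [List.cons_append, synth, synthAux_append, hc, List.replicate_succ, synthAux,
      synthAux_replicate_self]
    push_cast
    ring

lemma gc_append (l r : List ℤ) : gc (l ++ r) = gc l + gc r := by
  simp [gc]

lemma gc_replicate (t : ℕ) (a : ℤ) :
    (gc (List.replicate t a) : ℤ) = if 2 < a then (t : ℤ) else 0 := by
  by_cases h : 2 < a <;> simp [gc, h]

lemma mem_seqs {c : List ℤ} {n : ℕ} : c ∈ seqs n ↔ c.length = n ∧ inSigma4 c := by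
  constructor
  · intro h
    simp only [seqs, Finset.mem_image, Finset.mem_univ, true_and] at h
    obtain ⟨f, rfl⟩ := h
    refine ⟨by simp, ?_⟩
    intro x hx
    simp only [List.mem_map, List.mem_ofFn] at hx
    obtain ⟨y, ⟨i, rfl⟩, rfl⟩ := hx
    have := (f i).isLt
    constructor <;> omega
  · rintro ⟨hlen, hsig⟩
    simp only [seqs, Finset.mem_image, Finset.mem_univ, true_and]
    refine ⟨fun i => ⟨(c.get ⟨(i : ℕ), by omega⟩ - 1).toNat, ?_⟩, ?_⟩
    · have := hsig _ (c.get_mem ⟨(i : ℕ), by omega⟩)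
      omega
    · apply List.ext_get (by simp [hlen])
      intro i h1 h2
      simp only [List.get_eq_getElem, List.getElem_map, List.getElem_ofFn]
      have := hsig _ (List.getElem_mem h2)
      omega

lemma lastRunIs_iff {c : List ℤ} {a : ℤ} {t : ℕ} :
    lastRunIs c a t ↔ ∃ c', c = c' ++ List.replicate t a ∧ c'.getLast? ≠ some a := by
  constructor
  · rintro ⟨⟨c', rfl⟩, hmax⟩
    exact ⟨c', rfl, fun h => hmax (List.replicate_succ_suffix_append_replicate_iff.mpr h)⟩
  · rintro ⟨c', rfl, hc'⟩
    exact ⟨List.suffix_append _ _, fun h => hc' (List.replicate_succ_suffix_append_replicate_iff.mp h)⟩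

lemma exists_lastRunIs (c : List ℤ) (a : ℤ) : ∃ t, lastRunIs c a t := by
  simp only [lastRunIs_iff]
  induction c using List.reverseRecOn with
  | nil => exact ⟨0, [], by simp, by simp⟩
  | append_singleton d x ih =>
    by_cases hx : x = a
    · obtain ⟨t, d', rfl, hd'⟩ := ih
      exact ⟨t + 1, d', by simp [hx, List.replicate_succ'], hd'⟩
    · exact ⟨0, d ++ [x], by simp, by simpa using hx⟩

lemma lastRunIs.getLast? {c : List ℤ} {a : ℤ} {t : ℕ} (h : lastRunIs c a t) (ht : 1 ≤ t) :
    c.getLast? = some a :=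
  List.singleton_suffix_iff_getLast?_eq_some.mp ((List.replicate_suffix_replicate ht).trans h.1)

lemma exists_pos_lastRunIs {c : List ℤ} {b : ℤ} (hc : c.getLast? = some b) :
    ∃ t, 1 ≤ t ∧ lastRunIs c b t := by
  obtain ⟨t, ht⟩ := exists_lastRunIs c b
  refine ⟨t, Nat.one_le_iff_ne_zero.mpr ?_, ht⟩
  rintro rfl
  obtain ⟨c', rfl, hc'⟩ := lastRunIs_iff.mp ht
  exact hc' (by simpa using hc)

lemma lastRunIs.unique {c : List ℤ} {a a' : ℤ} {t t' : ℕ} (h : lastRunIs c a t)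
    (h' : lastRunIs c a' t') (ht : 1 ≤ t) (ht' : 1 ≤ t') : a = a' ∧ t = t' := by
  obtain rfl : a = a' := Option.some_inj.mp ((h.getLast? ht).symm.trans (h'.getLast? ht'))
  refine ⟨rfl, ?_⟩
  by_contra hne
  rcases Nat.lt_or_gt_of_ne hne with hlt | hlt
  · exact h.2 ((List.replicate_suffix_replicate hlt).trans h'.1)
  · exact h'.2 ((List.replicate_suffix_replicate hlt).trans h.1)

lemma lastRunIs.le_of_RLL {ℓ : ℕ} {c : List ℤ} {a : ℤ} {t : ℕ} (h : lastRunIs c a t)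
    (hR : RLL ℓ c) (ht : 1 ≤ t) : t ≤ ℓ := by
  by_contra! hlt
  exact hR a (List.mem_of_getLast? (h.getLast? ht))
    ((List.replicate_suffix_replicate hlt).trans h.1).isInfix

lemma RLL.append_replicate {ℓ t : ℕ} {c : List ℤ} {a : ℤ} (hR : RLL ℓ c)
    (hc : c.getLast? ≠ some a) (ht : t ≤ ℓ) : RLL ℓ (c ++ List.replicate t a) := by
  intro x _ hx
  rcases List.infix_append_iff_ne_nil.mp hx with h | h | ⟨l₁, l₂, hl₁, hl₂, hrep, hs, hp⟩
  · exact hR x (h.subset (List.mem_replicate.mpr ⟨by omega, rfl⟩)) h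
  · have := h.length_le
    simp only [List.length_replicate] at this
    omega
  · -- a run of `x` straddling the junction would force `c` to end in `a`
    obtain ⟨-, hl₁x, hl₂x⟩ := List.append_eq_replicate_iff.mp hrep.symm
    have hxa : x = a := by
      obtain ⟨y, hy⟩ := List.exists_mem_of_ne_nil l₂ hl₂
      have hyx : y = x := List.eq_of_mem_replicate (hl₂x ▸ hy)
      exact hyx ▸ List.eq_of_mem_replicate (hp.subset hy)
    apply hc
    rw [← List.singleton_suffix_iff_getLast?_eq_some, ← hxa]
    refine List.IsSuffix.trans ?_ hs
    rw [hl₁x]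
    exact List.replicate_suffix_replicate (List.length_pos_iff.mpr hl₁)

lemma mem_CsetG {n ℓ t : ℕ} {a m T : ℤ} {c : List ℤ} :
    c ∈ CsetG n ℓ a t m T ↔ (c.length = n ∧ inSigma4 c) ∧ RLL ℓ c ∧ lastRunIs c a t ∧
      (gc c : ℤ) = m ∧ synth c ≤ T := by
  rw [CsetG, Finset.mem_filter, mem_seqs]

lemma mem_alphabet_and_Icc_of_mem_CsetG {n ℓ t : ℕ} {a m T : ℤ} {c : List ℤ}
    (hc : c ∈ CsetG n ℓ a t m T) (ht : 1 ≤ t) :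
    a ∈ ({1, 2, 3, 4} : Finset ℤ) ∧ t ∈ Finset.Icc 1 ℓ := by
  obtain ⟨⟨-, hsig⟩, hR, hrun, -, -⟩ := mem_CsetG.mp hc
  have := hsig a (List.mem_of_getLast? (hrun.getLast? ht))
  exact ⟨by simp only [Finset.mem_insert, Finset.mem_singleton]; omega,
    Finset.mem_Icc.mpr ⟨ht, hrun.le_of_RLL hR ht⟩⟩

lemma disjoint_CsetG {n ℓ t t' : ℕ} {a a' m m' T T' : ℤ} (ht : 1 ≤ t) (ht' : 1 ≤ t')
    (h : a ≠ a' ∨ t ≠ t') : Disjoint (CsetG n ℓ a t m T) (CsetG n ℓ a' t' m' T') := by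
  rw [Finset.disjoint_left]
  intro c hc hc'
  have := (mem_CsetG.mp hc).2.2.1.unique (mem_CsetG.mp hc').2.2.1 ht ht'
  tauto

lemma append_replicate_mem_CsetG {n ℓ t t' : ℕ} {a a' m T : ℤ} {c : List ℤ}
    (hc : c ∈ CsetG (n - t) ℓ a' t' (m - gc (List.replicate t a))
      (T - 4 * ((t : ℤ) - 1) - smod (a - a')))
    (ht' : 1 ≤ t') (haa' : a' ≠ a) (ha : 1 ≤ a ∧ a ≤ 4) (ht : 1 ≤ t) (htℓ : t ≤ ℓ) (hn : t ≤ n) :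
    c ++ List.replicate t a ∈ CsetG n ℓ a t m T := by
  obtain ⟨⟨hlen, hsig⟩, hR, hrun, hgc, hsyn⟩ := mem_CsetG.mp hc
  have hlast : c.getLast? = some a' := hrun.getLast? ht'
  have hlast_ne : c.getLast? ≠ some a := by simpa [hlast] using haa'
  refine mem_CsetG.mpr ⟨⟨by simp only [List.length_append, List.length_replicate]; omega, ?_⟩,
    hR.append_replicate hlast_ne htℓ, lastRunIs_iff.mpr ⟨c, rfl, hlast_ne⟩, ?_, ?_⟩
  · intro x hx
    rcases List.mem_append.mp hx with h | h
    · exact hsig x h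
    · exact List.eq_of_mem_replicate h ▸ ha
  · rw [gc_append]
    push_cast
    linarith
  · rw [synth_append_replicate hlast ht]
    linarith

lemma exists_append_replicate_of_mem_CsetG {n ℓ t : ℕ} {a m T : ℤ} {c : List ℤ}
    (hc : c ∈ CsetG n ℓ a t m T) (ht : 1 ≤ t) (hn : t < n) :
    ∃ a' t' c', a' ≠ a ∧ 1 ≤ t' ∧
      c' ∈ CsetG (n - t) ℓ a' t' (m - gc (List.replicate t a))
        (T - 4 * ((t : ℤ) - 1) - smod (a - a')) ∧
      c = c' ++ List.replicate t a := by
  obtain ⟨⟨hlen, hsig⟩, hR, hrun, hgc, hsyn⟩ := mem_CsetG.mp hc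
  obtain ⟨c', rfl, hc'⟩ := lastRunIs_iff.mp hrun
  have hlen' : c'.length = n - t := by
    simp only [List.length_append, List.length_replicate] at hlen
    omega
  obtain ⟨a', ha'⟩ : ∃ a', c'.getLast? = some a' := by
    refine Option.ne_none_iff_exists'.mp fun hnil => ?_
    rw [List.getLast?_eq_none_iff.mp hnil, List.length_nil] at hlen'
    omega
  obtain ⟨t', ht', hrun'⟩ := exists_pos_lastRunIs ha'
  refine ⟨a', t', c', fun h => hc' (h ▸ ha'), ht', mem_CsetG.mpr ⟨⟨hlen', ?_⟩, ?_, hrun', ?_, ?_⟩, rfl⟩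
  · exact fun x hx => hsig x (List.mem_append_left _ hx)
  · exact fun x hx h => hR x (List.mem_append_left _ hx) (h.trans List.infix_append_left)
  · rw [gc_append] at hgc
    push_cast at hgc
    linarith
  · rw [synth_append_replicate ha' ht] at hsyn
    linarith

lemma CsetG_eq_image_biUnion {n ℓ t : ℕ} {a m T : ℤ}
    (ht : 1 ≤ t) (htℓ : t ≤ ℓ) (ha : 1 ≤ a ∧ a ≤ 4) (hn : t < n) :
    CsetG n ℓ a t m T =
      ((({1, 2, 3, 4} : Finset ℤ).erase a).biUnion fun a' => (Finset.Icc 1 ℓ).biUnion fun t' =>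
        CsetG (n - t) ℓ a' t' (m - (if 2 < a then (t : ℤ) else 0))
          (T - 4 * ((t : ℤ) - 1) - smod (a - a'))).image (· ++ List.replicate t a) := by
  ext c
  simp only [← gc_replicate, Finset.mem_image, Finset.mem_biUnion, Finset.mem_erase]
  constructor
  · intro hc
    obtain ⟨a', t', c', haa', ht', hc', rfl⟩ := exists_append_replicate_of_mem_CsetG hc ht hn
    obtain ⟨ha', ht'ℓ⟩ := mem_alphabet_and_Icc_of_mem_CsetG hc' ht'
    exact ⟨c', ⟨a', ⟨haa', ha'⟩, t', ht'ℓ, hc'⟩, rfl⟩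
  · rintro ⟨c', ⟨a', ⟨haa', -⟩, t', ht', hc'⟩, rfl⟩
    exact append_replicate_mem_CsetG hc' (Finset.mem_Icc.mp ht').1 haa' ha ht htℓ hn.le

theorem stmt7_general (n ℓ t : ℕ) (a : ℤ) (m T : ℤ)
    (ht : 1 ≤ t) (htℓ : t ≤ ℓ) (ha : 1 ≤ a ∧ a ≤ 4)
    (hn : t < n) :
    NcountG n ℓ a t m T =
      ∑ a' ∈ ({1, 2, 3, 4} : Finset ℤ).erase a, ∑ t' ∈ Finset.Icc 1 ℓ,
        NcountG (n - t) ℓ a' t' (m - (if 2 < a then (t : ℤ) else 0))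
          (T - 4 * ((t : ℤ) - 1) - smod (a - a')) := by
  rw [NcountG, CsetG_eq_image_biUnion ht htℓ ha hn,
    Finset.card_image_of_injective _ (List.append_left_injective _), Finset.card_biUnion]
  · refine Finset.sum_congr rfl fun a' _ => ?_
    rw [Finset.card_biUnion]
    · rfl
    · intro t₁ ht₁ t₂ ht₂ hne
      exact disjoint_CsetG (Finset.mem_Icc.mp ht₁).1 (Finset.mem_Icc.mp ht₂).1 (Or.inr hne)
  · intro a₁ _ a₂ _ hne
    simp only [Function.onFun, Finset.disjoint_biUnion_left, Finset.disjoint_biUnion_right]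
    intro t₂ ht₂ t₁ ht₁
    exact disjoint_CsetG (Finset.mem_Icc.mp ht₁).1 (Finset.mem_Icc.mp ht₂).1 (Or.inl hne)

theorem stmt7 (n ℓ t : ℕ) (a : ℤ) (m T : ℤ)
    (hℓ : 1 ≤ ℓ) (ht : 1 ≤ t) (htℓ : t ≤ ℓ) (ha : 1 ≤ a ∧ a ≤ 4)
    (hn : t < n) (hT : 4 * ((t : ℤ) - 1) + a ≤ T) :
    NcountG n ℓ a t m T =
      ∑ a' ∈ ({1, 2, 3, 4} : Finset ℤ).erase a, ∑ t' ∈ Finset.Icc 1 ℓ,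
        NcountG (n - t) ℓ a' t' (m - (if 2 < a then (t : ℤ) else 0))
          (T - 4 * ((t : ℤ) - 1) - smod (a - a')) :=
  stmt7_general n ℓ t a m T ht htℓ ha hn
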